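/- Let V be a vertex superalgebra with translation operator ∂ and γ a formal variable, and let Õ_γ(V) := Span_{ℂ[γ]}{ a ∘_{γ,2} b : a, b ∈ V }. Then ∂V ⊆ Õ_γ(V), i.e. ∂a ∈ Õ_γ(V) for every a ∈ V. -/

import Mathlib

/-!
Framework: vertex superalgebras over ℂ, Huang's operations `∘_{γ,n}`,
and the associated Zhu-type subspaces and quotients.
-/

noncomputable section

open scoped BigOperators

/-- A vertex superalgebra over `ℂ`: a `ℤ/2`-graded complex vector space `V`
(with grading given by a pair of complementary submodules `even`, `odd`),
a state-field correspondence `Y` (recorded through its modes `a_(n) = Y a n`),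
a vacuum vector, and an even translation operator `T = ∂`, subject to the
field condition, the vacuum axiom, the translation axiom and locality. -/
structure VertexSuperalgebra (V : Type) [AddCommGroup V] [Module ℂ V] where
  even : Submodule ℂ V
  odd : Submodule ℂ V
  grading_sup : even ⊔ odd = ⊤
  grading_inf : even ⊓ odd = ⊥
  /-- the modes of the state-field correspondence: `Y a n = a_(n)` -/
  Y : V →ₗ[ℂ] ℤ → Module.End ℂ V
  vacuum : V
  vacuum_even : vacuum ∈ even
  /-- the (even) translation operator `∂` -/
  T : Module.End ℂ V
  /-- field condition: `a_(n) b = 0` for `n ≫ 0` -/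
  field_cond : ∀ a b : V, ∃ N : ℤ, ∀ n : ℤ, N < n → Y a n b = 0
  /-- `Y(|0⟩, z) = id` -/
  vacuum_field : ∀ n : ℤ, Y vacuum n = if n = -1 then LinearMap.id else 0
  /-- `Y(a,z)|0⟩ = a + O(z)` -/
  creation_eq : ∀ a : V, Y a (-1) vacuum = a
  creation_zero : ∀ (a : V) (n : ℤ), 0 ≤ n → Y a n vacuum = 0
  T_vacuum : T vacuum = 0
  /-- translation axiom `[∂, Y(a,z)] = ∂_z Y(a,z)`, in modes -/
  translation : ∀ (a : V) (n : ℤ),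
    T ∘ₗ Y a n - Y a n ∘ₗ T = (((-n : ℤ) : ℂ)) • Y a (n - 1)
  /-- locality `(z-w)^M [Y(a,z), Y(b,w)] = 0`, in modes, for parity homogeneous
  `a`, `b` (the Boolean `pa` records the parity of `a`) -/
  locality : ∀ (a b : V) (pa pb : Bool),
    a ∈ (if pa then odd else even) → b ∈ (if pb then odd else even) →
    ∃ M : ℕ, ∀ m n : ℤ,
      ∑ k ∈ Finset.range (M + 1),
        ((-1 : ℂ) ^ k * (M.choose k : ℂ)) •
          (Y a (m + M - k) ∘ₗ Y b (n + k)
            - (if pa && pb then (-1 : ℂ) else 1) • (Y b (n + M - k) ∘ₗ Y a (m + k))) = 0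

namespace VertexSuperalgebra

variable {V : Type} [AddCommGroup V] [Module ℂ V]

/-- the submodule of elements of parity `p` (`false` = even, `true` = odd) -/
def part (𝒱 : VertexSuperalgebra V) (p : Bool) : Submodule ℂ V :=
  if p then 𝒱.odd else 𝒱.even

/-- the Koszul sign `(-1)^{|a||b|}` -/
def ksign (pa pb : Bool) : ℂ := if pa && pb then -1 else 1

end VertexSuperalgebra

/-- `c(j,n)`: the coefficient of `γ^j z^{-n+j}` in the expansion of the kernel
`γ^n e^{γ z} (e^{γ z} - 1)^{-n}`; equivalently, the `j`-th coefficient of the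
power series `e^t ((e^t - 1)/t)^{-n}`. -/
def zhuKernelCoeff (n j : ℕ) : ℂ :=
  PowerSeries.coeff (R := ℂ) j
    (PowerSeries.exp ℂ *
      ((PowerSeries.mk fun k => (((k + 1).factorial : ℂ))⁻¹)⁻¹) ^ n)

namespace VertexSuperalgebra

variable {V : Type} [AddCommGroup V] [Module ℂ V]

/-- Huang's operation `a ∘_{γ,n} b = Res_z [γ^n e^{γz} (e^{γz}-1)^{-n} Y(a,z) b] dz`
for a complex number `γ` (for `γ = 0` this is `a_{(-n)} b`).
The residue is computed via the expansion
`a ∘_{γ,n} b = ∑_{j ≥ 0} c(j,n) γ^j a_{(j-n)} b` (a finite sum). -/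
def circ (𝒱 : VertexSuperalgebra V) (γ : ℂ) (n : ℕ) (a b : V) : V :=
  ∑ᶠ j : ℕ, (zhuKernelCoeff n j * γ ^ j) • 𝒱.Y a ((j : ℤ) - (n : ℤ)) b

/-- Huang's operation `a ∘_{γ,n} b ∈ V[γ]` for a formal variable `γ`, with values in
the polynomial module `V[γ] = PolynomialModule ℂ V`. -/
def circP (𝒱 : VertexSuperalgebra V) (n : ℕ) (a b : V) : PolynomialModule ℂ V :=
  ∑ᶠ j : ℕ, PolynomialModule.single ℂ j (zhuKernelCoeff n j • 𝒱.Y a ((j : ℤ) - (n : ℤ)) b)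

/-- the λ-bracket `[a_λ b] = ∑_{n ≥ 0} (λ^n / n!) a_(n) b ∈ V[λ]` -/
def lamBr (𝒱 : VertexSuperalgebra V) (a b : V) : PolynomialModule ℂ V :=
  ∑ᶠ n : ℕ, PolynomialModule.single ℂ n (((n.factorial : ℂ))⁻¹ • 𝒱.Y a (n : ℤ) b)

/-- `Õ_γ(V) = Span_{ℂ[γ]}{ a ∘_{γ,2} b } ⊆ V[γ]` for a formal variable `γ` -/
def OtildeP (𝒱 : VertexSuperalgebra V) : Submodule (Polynomial ℂ) (PolynomialModule ℂ V) :=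
  Submodule.span (Polynomial ℂ) {x | ∃ a b : V, x = 𝒱.circP 2 a b}

/-- `Õ(V) = Õ_{γ=1}(V) = Span_ℂ{ a ∘_{1,2} b } ⊆ V` -/
def Otilde1 (𝒱 : VertexSuperalgebra V) : Submodule ℂ V :=
  Submodule.span ℂ {x | ∃ a b : V, x = 𝒱.circ 1 2 a b}

/-- the ℂ[γ]-bilinear extension of `∘_{γ,1}` to `V[γ]` -/
def mulP (𝒱 : VertexSuperalgebra V) (u v : PolynomialModule ℂ V) : PolynomialModule ℂ V :=
  ∑ᶠ i : ℕ, ∑ᶠ j : ℕ,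
    ((Polynomial.X : Polynomial ℂ) ^ (i + j)) • 𝒱.circP 1 (u.coeff i) (v.coeff j)

end VertexSuperalgebra



open PowerSeries Finset in
theorem zhuKernelCoeff_two_zero_one : zhuKernelCoeff 2 0 = 1 ∧ zhuKernelCoeff 2 1 = 0 := by
  have hA1 : (antidiagonal 1 : Finset (ℕ×ℕ)) = {(0,1),(1,0)} := rfl
  set φ : ℂ⟦X⟧ := PowerSeries.mk fun k => (((k + 1).factorial : ℂ))⁻¹ with hφ
  have hc0 : constantCoeff φ = 1 := by simp [hφ, coeff_mk]
  have hφ1 : (coeff 1) φ = 2⁻¹ := by simp [hφ, coeff_mk]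
  have hB0 : constantCoeff φ⁻¹ = 1 := by simp [hc0]
  have hB0' : (coeff 0) φ⁻¹ = 1 := by rw [coeff_zero_eq_constantCoeff_apply, hB0]
  have hB1 : (coeff 1) φ⁻¹ = -2⁻¹ := by
    rw [coeff_inv]
    simp [hA1, hφ1, hc0, hB0']
  have hE0 : (coeff 0) (exp ℂ) = 1 := by simp
  have hE1 : (coeff 1) (exp ℂ) = 1 := by simp [coeff_exp]
  have hsq : (φ⁻¹) ^ 2 = φ⁻¹ * φ⁻¹ := sq _
  constructor
  · simp only [zhuKernelCoeff, ← hφ, coeff_zero_eq_constantCoeff_apply, map_mul, map_pow, hB0]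
    simp
  · simp only [zhuKernelCoeff, ← hφ, hsq, coeff_mul, hA1]
    simp [coeff_mul, hA1, hB0', hB1, hE0, hE1]
    ring

theorem T_eq_mode {V : Type} [AddCommGroup V] [Module ℂ V]
    (𝒱 : VertexSuperalgebra V) (a : V) : 𝒱.T a = 𝒱.Y a (-2) 𝒱.vacuum := by
  have h := 𝒱.translation a (-1)
  have h2 := congrArg (fun f => f 𝒱.vacuum) h
  simp only [LinearMap.sub_apply, LinearMap.comp_apply, LinearMap.smul_apply,
    𝒱.creation_eq, 𝒱.T_vacuum, map_zero] at h2
  norm_num at h2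
  exact h2

theorem circP_vac_eq {V : Type} [AddCommGroup V] [Module ℂ V]
    (𝒱 : VertexSuperalgebra V) (a : V) :
    𝒱.circP 2 a 𝒱.vacuum = PolynomialModule.single ℂ 0 (𝒱.T a) := by
  rw [VertexSuperalgebra.circP]
  rw [finsum_eq_single _ 0]
  · rw [zhuKernelCoeff_two_zero_one.1]
    norm_num
    rw [← T_eq_mode]
  · intro j hj
    rcases Nat.lt_or_ge j 2 with hlt | hge
    · interval_cases j
      · exact absurd rfl hj
      · rw [zhuKernelCoeff_two_zero_one.2, zero_smul, PolynomialModule.single_zero]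
    · have h0 : (0:ℤ) ≤ (j:ℤ) - ((2:ℕ):ℤ) := by push_cast; omega
      rw [𝒱.creation_zero a _ h0, smul_zero, PolynomialModule.single_zero]

/-- For `γ` a formal variable, `∂V ⊆ Õ_γ(V)`:
`∂a ∈ Õ_γ(V)` for every `a ∈ V` (where `V ⊆ V[γ]` via `a ↦ a γ^0`). -/
theorem T_mem_OtildeP
    {V : Type} [AddCommGroup V] [Module ℂ V] (𝒱 : VertexSuperalgebra V) (a : V) :
    PolynomialModule.single ℂ 0 (𝒱.T a) ∈ 𝒱.OtildeP := by
  rw [← circP_vac_eq 𝒱 a]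
  exact Submodule.subset_span ⟨a, 𝒱.vacuum, rfl⟩

end
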